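/- Suppose the basic assumption, (A1) and (A2) hold. Then for every x ∈ D(T^∞), the limit lim_{n→∞} ‖T_e^n x‖^{1/n} exists and equals sup{|z| : z ∈ closure of a(supp F x)}, in the extended nonnegative reals [0,∞]. -/

import Mathlib

/-!
Along the orbit, `F (T_e^n x) λ = a λ ^ n • F x λ`. Reconstructing `T^n x` through (A2) gives
`‖T^n x‖ ≤ r^n ∑_λ ‖G_λ (F x λ)‖`, where `r` is the supremum of `|a|` over `supp F x`, so the
`limsup` of the `n`-th roots is at most `r`. Conversely, for `λ ∈ supp F x` the continuity (A1)
of the `λ`-th coordinate gives `|a λ|^n ‖F x λ‖ ≤ C_λ ‖T^n x‖`, so the `liminf` is at least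
`|a λ|`. Passing to the closure of `a (supp F x)` does not change the supremum of `|·|`.
-/

open Filter
open scoped ENNReal Topology

noncomputable section

variable {X : Type*} [NormedAddCommGroup X] [NormedSpace ℂ X]

/-- `y` is the orbit of `x` under the partially defined operator `T` : `y n = T^n x`;
its existence witnesses `x ∈ D(T^∞)`. -/
def IsIterSeq (T : X →ₗ.[ℂ] X) (x : X) (y : ℕ → X) : Prop :=
  y 0 = x ∧ ∀ n : ℕ, ∃ hn : y n ∈ T.domain, T ⟨y n, hn⟩ = y (n + 1)

namespace ENNReal

lemma tendsto_rpow_one_div_nat {d : ℝ≥0∞} (h0 : d ≠ 0) (htop : d ≠ ⊤) :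
    Tendsto (fun n : ℕ => d ^ (1 / (n : ℝ))) atTop (𝓝 1) := by
  have hd : 0 < d.toReal := toReal_pos h0 htop
  have hreal : Tendsto (fun n : ℕ => d.toReal ^ (1 / (n : ℝ))) atTop (𝓝 1) := by
    simpa [Function.comp_def] using (Real.continuousAt_const_rpow hd.ne').tendsto.comp
      tendsto_one_div_atTop_nhds_zero_nat
  convert (ENNReal.tendsto_ofReal hreal) using 2 with n
  · rw [← ofReal_rpow_of_pos hd, ofReal_toReal htop]
  · simp

lemma pow_mul_rpow_one_div (c d : ℝ≥0∞) {n : ℕ} (hn : n ≠ 0) :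
    (c ^ n * d) ^ (1 / (n : ℝ)) = c * d ^ (1 / (n : ℝ)) := by
  rw [mul_rpow_of_nonneg _ _ (by positivity), ← rpow_natCast, ← rpow_mul,
    mul_one_div_cancel (Nat.cast_ne_zero.mpr hn), rpow_one]

lemma limsup_rpow_one_div_le {u : ℕ → ℝ≥0∞} {r M : ℝ≥0∞} (hM : M ≠ ⊤)
    (hu : ∀ n, u n ≤ r ^ n * M) :
    limsup (fun n : ℕ => u n ^ (1 / (n : ℝ))) atTop ≤ r := by
  -- `M + 1` rather than `M`, whose `n`-th roots need not tend to `1` when `M = 0`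
  have hbound : ∀ᶠ n : ℕ in atTop, u n ^ (1 / (n : ℝ)) ≤ r * (M + 1) ^ (1 / (n : ℝ)) := by
    filter_upwards [eventually_ne_atTop 0] with n hn
    rw [← pow_mul_rpow_one_div _ _ hn]
    gcongr
    exact (hu n).trans (by gcongr; exact le_self_add)
  have hlim := ENNReal.Tendsto.const_mul (a := r)
    (tendsto_rpow_one_div_nat (d := M + 1) (by simp) (by simpa using hM)) (Or.inl one_ne_zero)
  calc _ ≤ limsup (fun n : ℕ => r * (M + 1) ^ (1 / (n : ℝ))) atTop := limsup_le_limsup hbound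
    _ = r := by simpa using hlim.limsup_eq

lemma le_liminf_rpow_one_div {u : ℕ → ℝ≥0∞} {c d : ℝ≥0∞} (hd : d ≠ 0)
    (hu : ∀ n, c ^ n * d ≤ u n) :
    c ≤ liminf (fun n : ℕ => u n ^ (1 / (n : ℝ))) atTop := by
  -- `min d 1` rather than `d`, which may be `∞`
  have hbound : ∀ᶠ n : ℕ in atTop, c * (min d 1) ^ (1 / (n : ℝ)) ≤ u n ^ (1 / (n : ℝ)) := by
    filter_upwards [eventually_ne_atTop 0] with n hn
    rw [← pow_mul_rpow_one_div _ _ hn]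
    gcongr
    exact (mul_le_mul_right (min_le_left d 1) _).trans (hu n)
  have hlim := ENNReal.Tendsto.const_mul (a := c)
    (tendsto_rpow_one_div_nat (d := min d 1) (by simp [hd]) (by simp)) (Or.inl one_ne_zero)
  calc c = liminf (fun n : ℕ => c * (min d 1) ^ (1 / (n : ℝ))) atTop := by
        simpa using hlim.liminf_eq.symm
    _ ≤ _ := liminf_le_liminf hbound

end ENNReal

lemma Continuous.biSup_closure {α β : Type*} [TopologicalSpace α] [CompleteLattice β]
    [TopologicalSpace β] [ClosedIicTopology β] {f : α → β} (hf : Continuous f) (s : Set α) :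
    ⨆ z ∈ closure s, f z = ⨆ z ∈ s, f z :=
  le_antisymm
    (iSup₂_le fun _ hz => closure_minimal (fun w hw => le_iSup₂ (f := fun w _ => f w) w hw)
      (isClosed_Iic.preimage hf) hz)
    (biSup_mono fun _ => (subset_closure ·))

namespace IsIterSeq

variable {T Te : X →ₗ.[ℂ] X} {x : X} {y : ℕ → X}

lemma mem_domain (hy : IsIterSeq T x y) (n : ℕ) : y n ∈ T.domain := (hy.2 n).1

lemma apply_eq (hy : IsIterSeq T x y) (n : ℕ) : T ⟨y n, hy.mem_domain n⟩ = y (n + 1) :=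
  (hy.2 n).2

lemma mono (hy : IsIterSeq T x y) (hTTe : T ≤ Te) : IsIterSeq Te x y :=
  ⟨hy.1, fun n => ⟨hTTe.1 (hy.mem_domain n), (hTTe.2 rfl).symm.trans (hy.apply_eq n)⟩⟩

variable {Λ : Type*} {L : Λ → Type*} [∀ l, NormedAddCommGroup (L l)] [∀ l, NormedSpace ℂ (L l)]
  {F : X →ₗ[ℂ] ∀ l, L l} {a : Λ → ℂ}

lemma map_apply_eq_pow_smul (hy : IsIterSeq T x y)
    (hdiag : ∀ (x : T.domain) (l : Λ), F (T x) l = a l • F (x : X) l) (n : ℕ) (l : Λ) :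
    F (y n) l = a l ^ n • F x l := by
  induction n with
  | zero => rw [hy.1, pow_zero, one_smul]
  | succ n ih => rw [← hy.apply_eq n, hdiag, ih, smul_smul, pow_succ']

lemma enorm_le_pow_mul_tsum {G : ∀ l : Λ, L l →ₗ[ℂ] X} (hy : IsIterSeq T x y) (hTTe : T ≤ Te)
    (hdiag : ∀ (x : Te.domain) (l : Λ), F (Te x) l = a l • F (x : X) l)
    (hG : ∀ x : T.domain, HasSum (fun l : Λ => G l (F (x : X) l)) (x : X)) (n : ℕ) :
    ‖y n‖ₑ ≤ (⨆ l ∈ {l | F x l ≠ 0}, ‖a l‖ₑ) ^ n * ∑' l, ‖G l (F x l)‖ₑ := by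
  have hF := (hy.mono hTTe).map_apply_eq_pow_smul hdiag n
  calc ‖y n‖ₑ = ‖∑' l, G l (F (y n) l)‖ₑ := by rw [(hG ⟨y n, hy.mem_domain n⟩).tsum_eq]
    _ ≤ ∑' l, ‖G l (F (y n) l)‖ₑ := enorm_tsum_le_tsum_enorm
    _ = ∑' l, ‖a l‖ₑ ^ n * ‖G l (F x l)‖ₑ := by simp only [hF, map_smul, enorm_smul, enorm_pow]
    _ ≤ ∑' l, (⨆ l ∈ {l | F x l ≠ 0}, ‖a l‖ₑ) ^ n * ‖G l (F x l)‖ₑ := by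
      refine ENNReal.tsum_le_tsum fun l => ?_
      by_cases hl : F x l = 0
      · simp [hl]
      · gcongr
        exact le_iSup₂ (f := fun l (_ : l ∈ {l | F x l ≠ 0}) => ‖a l‖ₑ) l hl
    _ = _ := ENNReal.tsum_mul_left

lemma limsup_rpow_one_div_le {G : ∀ l : Λ, L l →ₗ[ℂ] X} (hy : IsIterSeq T x y) (hTTe : T ≤ Te)
    (hdiag : ∀ (x : Te.domain) (l : Λ), F (Te x) l = a l • F (x : X) l)
    (hA2 : ∀ x : T.domain, Summable (fun l : Λ => ‖G l (F (x : X) l)‖) ∧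
      HasSum (fun l : Λ => G l (F (x : X) l)) (x : X)) :
    limsup (fun n : ℕ => ‖y n‖ₑ ^ (1 / (n : ℝ))) atTop ≤ ⨆ l ∈ {l | F x l ≠ 0}, ‖a l‖ₑ := by
  have hsum : Summable (fun l : Λ => ‖G l (F x l)‖) := by
    simpa [hy.1] using (hA2 ⟨y 0, hy.mem_domain 0⟩).1
  exact ENNReal.limsup_rpow_one_div_le (tsum_enorm_ne_top_iff_summable_norm.2 hsum)
    (hy.enorm_le_pow_mul_tsum hTTe hdiag fun x => (hA2 x).2)

lemma enorm_le_liminf_rpow_one_div (hy : IsIterSeq T x y)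
    (hdiag : ∀ (x : T.domain) (l : Λ), F (T x) l = a l • F (x : X) l)
    (hA1 : ∀ l : Λ, Continuous fun x : T.domain => F (x : X) l) {l : Λ} (hl : F x l ≠ 0) :
    ‖a l‖ₑ ≤ liminf (fun n : ℕ => ‖y n‖ₑ ^ (1 / (n : ℝ))) atTop := by
  let φ : T.domain →L[ℂ] L l := ⟨LinearMap.proj l ∘ₗ F ∘ₗ T.domain.subtype, hA1 l⟩
  refine ENNReal.le_liminf_rpow_one_div (d := ‖F x l‖ₑ / ‖φ‖ₑ)
    (ENNReal.div_pos (enorm_ne_zero.2 hl) enorm_ne_top).ne' fun n => ?_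
  rw [← mul_div_assoc, ← enorm_pow, ← enorm_smul, ← hy.map_apply_eq_pow_smul hdiag]
  exact ENNReal.div_le_of_le_mul' (φ.le_opENorm ⟨y n, hy.mem_domain n⟩)

end IsIterSeq

theorem stmt4_general {Λ : Type*} {L : Λ → Type*}
    [∀ l, NormedAddCommGroup (L l)] [∀ l, NormedSpace ℂ (L l)]
    (T Te : X →ₗ.[ℂ] X) (hTTe : T ≤ Te)
    (F : X →ₗ[ℂ] ∀ l, L l)
    (a : Λ → ℂ)
    (hdiag : ∀ (x : Te.domain) (l : Λ), F (Te x) l = a l • F (x : X) l)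
    (hA1 : ∀ l : Λ, Continuous fun x : Te.domain => F (x : X) l)
    (G : ∀ l : Λ, L l →ₗ[ℂ] X)
    (hA2 : ∀ x : T.domain, Summable (fun l : Λ => ‖G l (F (x : X) l)‖) ∧
      HasSum (fun l : Λ => G l (F (x : X) l)) (x : X))
    (x : X) (y : ℕ → X) (hy : IsIterSeq T x y) :
    Filter.Tendsto (fun n : ℕ => (‖y n‖₊ : ℝ≥0∞) ^ (1 / (n : ℝ))) atTop
      (𝓝 (⨆ z ∈ closure (a '' {l : Λ | F x l ≠ 0}), (‖z‖₊ : ℝ≥0∞))) := by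
  simp only [← enorm_eq_nnnorm]
  rw [continuous_enorm.biSup_closure, iSup_image]
  exact tendsto_of_le_liminf_of_limsup_le
    (iSup₂_le fun _ hl => (hy.mono hTTe).enorm_le_liminf_rpow_one_div hdiag hA1 hl)
    (hy.limsup_rpow_one_div_le hTTe hdiag hA2)

/-- Suppose the basic assumption (`F` linear, injective on the domain of `T_e`, diagonalising
`T_e` with eigenvalue function `a`), (A1) (coordinatewise continuity of `F` on the domain of
`T_e`) and (A2) (reconstruction of elements of the domain `D` of `T` by an absolutely
convergent series) hold. Then for every `x ∈ D(T^∞)` (with orbit `y n = T^n x = T_e^n x`),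
the limit `lim ‖T_e^n x‖^{1/n}` exists and equals
`sup {|z| : z ∈ closure (a (supp F x))}` in `[0,∞]`. -/
theorem stmt4 [CompleteSpace X] {Λ : Type*} [Nonempty Λ] {L : Λ → Type*}
    [∀ l, NormedAddCommGroup (L l)] [∀ l, NormedSpace ℂ (L l)]
    (T Te : X →ₗ.[ℂ] X) (hTTe : T ≤ Te)
    (F : X →ₗ[ℂ] ∀ l, L l) (hinj : Set.InjOn F (Te.domain : Set X))
    (a : Λ → ℂ)
    (hdiag : ∀ (x : Te.domain) (l : Λ), F (Te x) l = a l • F (x : X) l)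
    (hA1 : ∀ l : Λ, Continuous fun x : Te.domain => F (x : X) l)
    (G : ∀ l : Λ, L l →ₗ[ℂ] X) (hGD : ∀ (l : Λ) (v : L l), G l v ∈ T.domain)
    (hA2 : ∀ x : T.domain, Summable (fun l : Λ => ‖G l (F (x : X) l)‖) ∧
      HasSum (fun l : Λ => G l (F (x : X) l)) (x : X))
    (x : X) (y : ℕ → X) (hy : IsIterSeq T x y) :
    Filter.Tendsto (fun n : ℕ => (‖y n‖₊ : ℝ≥0∞) ^ (1 / (n : ℝ))) atTop
      (𝓝 (⨆ z ∈ closure (a '' {l : Λ | F x l ≠ 0}), (‖z‖₊ : ℝ≥0∞))) :=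
  stmt4_general T Te hTTe F a hdiag hA1 G hA2 x y hy
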